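/- Let n ≥ 1, α, c ∈ ℝ, b > 0, let w ∈ ℝⁿ with |w| = 1 and set ψ(x) = (1/√b) w·x and γ = α − c²/b. Define the backward operator P* acting on smooth functions v : ℝ × ℝⁿ → ℂ by P*v = −∂_t³v + α ∂_t²v + b Δ ∂_t v − c² Δ v, where Δ acts in x only. Then for every smooth a : ℝ × ℝⁿ → ℂ and every (t,x) ∈ ℝ × ℝⁿ, lim_{μ → ∞} μ^{−2} e^{−iμ(ψ(x)+t)} ( P*( e^{iμ(ψ(·)+·)} a ) )(t,x) = 2 ( ∂_t a(t,x) − √b w·∇a(t,x) − (γ/2) a(t,x) ); in particular the μ³-order coefficient of the conjugated operator vanishes and the leading transport equation for the backward geometric optics amplitude is ∂_t a − √b w·∇a − (γ/2) a = 0. -/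

import Mathlib

open scoped BigOperators ContDiff
open Filter

noncomputable section

/-- Time derivative `∂_t u`. -/
def dt {n : ℕ} (u : ℝ → (Fin n → ℝ) → ℂ) : ℝ → (Fin n → ℝ) → ℂ :=
  fun t x => deriv (fun s => u s x) t

/-- Spatial partial derivative `∂_{x_j} u` (in `x` only). -/
def pd {n : ℕ} (j : Fin n) (u : ℝ → (Fin n → ℝ) → ℂ) : ℝ → (Fin n → ℝ) → ℂ :=
  fun t x => fderiv ℝ (fun y => u t y) x (Pi.single j 1)

/-- Spatial Laplacian `Δu` (in `x` only). -/
def lap {n : ℕ} (u : ℝ → (Fin n → ℝ) → ℂ) : ℝ → (Fin n → ℝ) → ℂ :=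
  fun t x => ∑ j, pd j (pd j u) t x

/-- The backward MGT operator `P*v = −∂_t³v + α ∂_t²v + b Δ ∂_t v − c² Δ v`. -/
def MGTBack {n : ℕ} (α c b : ℝ) (u : ℝ → (Fin n → ℝ) → ℂ) : ℝ → (Fin n → ℝ) → ℂ :=
  fun t x => -dt (dt (dt u)) t x + (α : ℂ) * dt (dt u) t x
    + (b : ℂ) * lap (dt u) t x - (c : ℂ) ^ 2 * lap u t x

/-- Geometric optics ansatz `e^{iμ(ψ(x)+t)} a(t,x)`. -/
def GO {n : ℕ} (μ : ℝ) (ψ : (Fin n → ℝ) → ℝ) (a : ℝ → (Fin n → ℝ) → ℂ) :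
    ℝ → (Fin n → ℝ) → ℂ :=
  fun t x => Complex.exp (Complex.I * (μ : ℂ) * ((ψ x + t : ℝ) : ℂ)) * a t x

/-- The linear plane-wave phase `ψ(x) = (1/√b) w·x`. -/
def planePhase {n : ℕ} (b : ℝ) (w : Fin n → ℝ) : (Fin n → ℝ) → ℝ :=
  fun x => (1 / Real.sqrt b) * ∑ j, w j * x j

namespace MGTAux

variable {n : ℕ}

/-- Joint smoothness of an amplitude. -/
def S (f : ℝ → (Fin n → ℝ) → ℂ) : Prop :=
  ContDiff ℝ ∞ (fun p : ℝ × (Fin n → ℝ) => f p.1 p.2)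

lemma S.diff {f : ℝ → (Fin n → ℝ) → ℂ} (hf : S f) :
    Differentiable ℝ (fun p : ℝ × (Fin n → ℝ) => f p.1 p.2) :=
  hf.differentiable (by simp)

lemma hasDerivAt_sliceT {f : ℝ → (Fin n → ℝ) → ℂ} (hf : S f) (t : ℝ) (x : Fin n → ℝ) :
    HasDerivAt (fun s : ℝ => f s x)
      (fderiv ℝ (fun q : ℝ × (Fin n → ℝ) => f q.1 q.2) (t, x) ((1 : ℝ), (0 : Fin n → ℝ))) t :=
  by have h := (hf.diff (t, x)).hasFDerivAt.comp_hasDerivAt t ((hasDerivAt_id t).prodMk (hasDerivAt_const t x)); exact h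

lemma dt_eq {f : ℝ → (Fin n → ℝ) → ℂ} (hf : S f) (t : ℝ) (x : Fin n → ℝ) :
    dt f t x = fderiv ℝ (fun q : ℝ × (Fin n → ℝ) => f q.1 q.2) (t, x) ((1 : ℝ), (0 : Fin n → ℝ)) :=
  (hasDerivAt_sliceT hf t x).deriv

lemma hasDerivAt_dt {f : ℝ → (Fin n → ℝ) → ℂ} (hf : S f) (t : ℝ) (x : Fin n → ℝ) :
    HasDerivAt (fun s => f s x) (dt f t x) t := by
  rw [dt_eq hf t x]; exact hasDerivAt_sliceT hf t x

lemma hasFDerivAt_sliceX {f : ℝ → (Fin n → ℝ) → ℂ} (hf : S f) (t : ℝ) (x : Fin n → ℝ) :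
    HasFDerivAt (fun y => f t y)
      ((fderiv ℝ (fun q : ℝ × (Fin n → ℝ) => f q.1 q.2) (t, x)).comp
        ((0 : (Fin n → ℝ) →L[ℝ] ℝ).prod (ContinuousLinearMap.id ℝ _))) x := by
  have h2 : HasFDerivAt (fun y : Fin n → ℝ => ((t, y) : ℝ × (Fin n → ℝ)))
      ((0 : (Fin n → ℝ) →L[ℝ] ℝ).prod (ContinuousLinearMap.id ℝ _)) x :=
    (hasFDerivAt_const t x).prodMk (hasFDerivAt_id x)
  exact ((hf.diff (t, x)).hasFDerivAt.comp x h2)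

lemma pd_eq {f : ℝ → (Fin n → ℝ) → ℂ} (hf : S f) (j : Fin n) (t : ℝ) (x : Fin n → ℝ) :
    pd j f t x
      = fderiv ℝ (fun q : ℝ × (Fin n → ℝ) => f q.1 q.2) (t, x) ((0 : ℝ), Pi.single j 1) := by
  show fderiv ℝ (fun y => f t y) x (Pi.single j 1) = _
  rw [(hasFDerivAt_sliceX hf t x).fderiv]
  simp

lemma hasFDerivAt_pd {f : ℝ → (Fin n → ℝ) → ℂ} (hf : S f) (t : ℝ) (x : Fin n → ℝ) :
    HasFDerivAt (fun y => f t y) (fderiv ℝ (fun y => f t y) x) x :=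
  (hasFDerivAt_sliceX hf t x).fderiv ▸ hasFDerivAt_sliceX hf t x

lemma S_dt {f : ℝ → (Fin n → ℝ) → ℂ} (hf : S f) : S (dt f) := by
  have heq : (fun p : ℝ × (Fin n → ℝ) => dt f p.1 p.2)
      = fun p => fderiv ℝ (fun q : ℝ × (Fin n → ℝ) => f q.1 q.2) p ((1 : ℝ), (0 : Fin n → ℝ)) := by
    funext p; exact dt_eq hf p.1 p.2
  unfold S
  rw [heq]
  exact (hf.fderiv_right (by exact_mod_cast le_refl _)).clm_apply contDiff_const

lemma S_pd {f : ℝ → (Fin n → ℝ) → ℂ} (hf : S f) (j : Fin n) : S (pd j f) := by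
  have heq : (fun p : ℝ × (Fin n → ℝ) => pd j f p.1 p.2)
      = fun p => fderiv ℝ (fun q : ℝ × (Fin n → ℝ) => f q.1 q.2) p ((0 : ℝ), Pi.single j 1) := by
    funext p; exact pd_eq hf j p.1 p.2
  unfold S
  rw [heq]
  exact (hf.fderiv_right (by exact_mod_cast le_refl _)).clm_apply contDiff_const

lemma S_lin {f g : ℝ → (Fin n → ℝ) → ℂ} (z : ℂ) (hf : S f) (hg : S g) :
    S (fun t x => z * f t x + g t x) :=
  (contDiff_const.mul hf).add hg

lemma dt_lin {f g : ℝ → (Fin n → ℝ) → ℂ} (z : ℂ) (hf : S f) (hg : S g) :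
    dt (fun t x => z * f t x + g t x) = fun t x => z * dt f t x + dt g t x := by
  funext t x
  exact (((hasDerivAt_dt hf t x).const_mul z).add (hasDerivAt_dt hg t x)).deriv

lemma pd_lin {f g : ℝ → (Fin n → ℝ) → ℂ} (z : ℂ) (j : Fin n) (hf : S f) (hg : S g) :
    pd j (fun t x => z * f t x + g t x) = fun t x => z * pd j f t x + pd j g t x := by
  funext t x
  have h := (((hasFDerivAt_pd hf t x).const_mul z).fun_add (hasFDerivAt_pd hg t x))
  show fderiv ℝ (fun y => z * f t y + g t y) x (Pi.single j 1) = _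
  rw [h.fderiv]
  simp [pd]

lemma dt_GO {f : ℝ → (Fin n → ℝ) → ℂ} (μ : ℝ) (ψ : (Fin n → ℝ) → ℝ) (hf : S f) :
    dt (GO μ ψ f) = GO μ ψ (fun t x => Complex.I * (μ : ℂ) * f t x + dt f t x) := by
  funext t x
  have hinner : HasDerivAt (fun s : ℝ => Complex.I * (μ : ℂ) * ((ψ x + s : ℝ) : ℂ))
      (Complex.I * (μ : ℂ)) t := by
    have h0 : HasDerivAt (fun s : ℝ => ((ψ x + s : ℝ) : ℂ)) ((1 : ℝ) : ℂ) t :=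
      ((hasDerivAt_id t).const_add (ψ x)).ofReal_comp
    simpa using h0.const_mul (Complex.I * (μ : ℂ))
  have h3 := (hinner.cexp).fun_mul (hasDerivAt_dt hf t x)
  show deriv (fun s : ℝ => Complex.exp (Complex.I * (μ : ℂ) * ((ψ x + s : ℝ) : ℂ)) * f s x) t = _
  rw [h3.deriv]
  show _ = Complex.exp (Complex.I * (μ : ℂ) * ((ψ x + t : ℝ) : ℂ))
    * (Complex.I * (μ : ℂ) * f t x + dt f t x)
  ring

lemma pd_GO {f : ℝ → (Fin n → ℝ) → ℂ} (μ b : ℝ) (w : Fin n → ℝ) (j : Fin n) (hf : S f) :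
    pd j (GO μ (planePhase b w) f)
      = GO μ (planePhase b w)
          (fun t x => Complex.I * (μ : ℂ) * ((w j / Real.sqrt b : ℝ) : ℂ) * f t x
            + pd j f t x) := by
  funext t x
  have hψ : HasFDerivAt (planePhase b w)
      ((1 / Real.sqrt b) • (∑ k, w k •
        (ContinuousLinearMap.proj (R := ℝ) (φ := fun _ : Fin n => ℝ) k))) x := by
    have hsum : HasFDerivAt (fun y : Fin n → ℝ => ∑ k, w k * y k)
        (∑ k, w k • (ContinuousLinearMap.proj (R := ℝ) (φ := fun _ : Fin n => ℝ) k)) x := by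
      apply HasFDerivAt.fun_sum
      intro k _
      simpa [smul_smul] using
        ((ContinuousLinearMap.proj (R := ℝ) (φ := fun _ : Fin n => ℝ) k).hasFDerivAt
          (x := x)).const_mul (w k)
    exact hsum.const_mul (1 / Real.sqrt b)
  have hψv : ((1 / Real.sqrt b) • (∑ k, w k •
      (ContinuousLinearMap.proj (R := ℝ) (φ := fun _ : Fin n => ℝ) k)))
      (Pi.single j 1) = w j / Real.sqrt b := by
    simp [ContinuousLinearMap.sum_apply, Pi.single_apply, Finset.sum_ite_eq', mul_comm,
      div_eq_inv_mul]
  have hR : HasFDerivAt (fun y : Fin n → ℝ => ((planePhase b w y + t : ℝ) : ℂ))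
      (Complex.ofRealCLM.comp ((1 / Real.sqrt b) • (∑ k, w k •
        (ContinuousLinearMap.proj (R := ℝ) (φ := fun _ : Fin n => ℝ) k)))) x :=
    Complex.ofRealCLM.hasFDerivAt.comp x (hψ.add_const t)
  have hmul := ((hR.const_mul (Complex.I * (μ : ℂ))).cexp).fun_mul (hasFDerivAt_pd hf t x)
  show fderiv ℝ
      (fun y => Complex.exp (Complex.I * (μ : ℂ) * ((planePhase b w y + t : ℝ) : ℂ)) * f t y)
      x (Pi.single j 1) = _
  rw [hmul.fderiv]
  show _ = Complex.exp (Complex.I * (μ : ℂ) * ((planePhase b w x + t : ℝ) : ℂ))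
    * (Complex.I * (μ : ℂ) * ((w j / Real.sqrt b : ℝ) : ℂ) * f t x + pd j f t x)
  simp only [ContinuousLinearMap.add_apply, ContinuousLinearMap.smul_apply,
    ContinuousLinearMap.comp_apply, hψv, pd, smul_eq_mul, Complex.ofRealCLM_apply]
  push_cast
  ring

lemma pdpd_GO {f : ℝ → (Fin n → ℝ) → ℂ} (μ b : ℝ) (w : Fin n → ℝ) (j : Fin n) (hf : S f) :
    pd j (pd j (GO μ (planePhase b w) f))
      = GO μ (planePhase b w) (fun t x =>
          Complex.I * (μ : ℂ) * ((w j / Real.sqrt b : ℝ) : ℂ)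
              * (Complex.I * (μ : ℂ) * ((w j / Real.sqrt b : ℝ) : ℂ) * f t x + pd j f t x)
            + (Complex.I * (μ : ℂ) * ((w j / Real.sqrt b : ℝ) : ℂ) * pd j f t x
                + pd j (pd j f) t x)) := by
  rw [pd_GO μ b w j hf, pd_GO μ b w j (S_lin _ hf (S_pd hf j))]
  apply congrArg
  funext s y
  rw [pd_lin (Complex.I * (μ : ℂ) * ((w j / Real.sqrt b : ℝ) : ℂ)) j hf (S_pd hf j)]

lemma sum_helper (b : ℝ) (w : Fin n → ℝ) (hb : 0 < b) (hw : ∑ j, w j ^ 2 = 1)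
    (L H : ℂ) (q r : Fin n → ℂ) :
    ∑ j, (L * ((w j / Real.sqrt b : ℝ) : ℂ) * (L * ((w j / Real.sqrt b : ℝ) : ℂ) * H + q j)
        + (L * ((w j / Real.sqrt b : ℝ) : ℂ) * q j + r j))
      = L ^ 2 * H * (1 / (b : ℂ)) + 2 * L * (∑ j, ((w j / Real.sqrt b : ℝ) : ℂ) * q j)
        + ∑ j, r j := by
  have hc : ∑ j, ((w j / Real.sqrt b : ℝ) : ℂ) ^ 2 = 1 / (b : ℂ) := by
    have h1 : ∀ j, ((w j / Real.sqrt b : ℝ) : ℂ) ^ 2 = ((w j ^ 2 / b : ℝ) : ℂ) := by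
      intro j
      rw [← Complex.ofReal_pow, div_pow, Real.sq_sqrt hb.le]
    rw [Finset.sum_congr rfl fun j _ => h1 j]
    rw [← Complex.ofReal_sum, ← Finset.sum_div, hw]
    norm_num
  calc ∑ j, (L * ((w j / Real.sqrt b : ℝ) : ℂ) * (L * ((w j / Real.sqrt b : ℝ) : ℂ) * H + q j)
        + (L * ((w j / Real.sqrt b : ℝ) : ℂ) * q j + r j))
      = ∑ j, ((L ^ 2 * H) * ((w j / Real.sqrt b : ℝ) : ℂ) ^ 2
          + (2 * L) * (((w j / Real.sqrt b : ℝ) : ℂ) * q j) + r j) :=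
        Finset.sum_congr rfl fun j _ => by ring
    _ = (L ^ 2 * H) * (∑ j, ((w j / Real.sqrt b : ℝ) : ℂ) ^ 2)
          + (2 * L) * (∑ j, ((w j / Real.sqrt b : ℝ) : ℂ) * q j) + ∑ j, r j := by
        rw [Finset.sum_add_distrib, Finset.sum_add_distrib, ← Finset.mul_sum, ← Finset.mul_sum]
    _ = _ := by rw [hc]

lemma sum_split1 (z : ℂ) (cc u v : Fin n → ℂ) :
    ∑ j, cc j * (z * u j + v j) = z * (∑ j, cc j * u j) + ∑ j, cc j * v j := by
  rw [Finset.mul_sum, ← Finset.sum_add_distrib]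
  exact Finset.sum_congr rfl fun j _ => by ring

lemma sum_split2 (z : ℂ) (u v : Fin n → ℂ) :
    ∑ j, (z * u j + v j) = z * (∑ j, u j) + ∑ j, v j := by
  rw [Finset.mul_sum, ← Finset.sum_add_distrib]

lemma key_algebra (μb bC cC αC : ℂ) (hμ : μb ≠ 0) (hbC : bC ≠ 0)
    (A At Att Attt SP SPt SL SLt : ℂ) :
    (μb ^ 2)⁻¹ *
      (-(Complex.I * μb * (Complex.I * μb * (Complex.I * μb * A + At)
            + (Complex.I * μb * At + Att))
          + (Complex.I * μb * (Complex.I * μb * At + Att) + (Complex.I * μb * Att + Attt)))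
        + αC * (Complex.I * μb * (Complex.I * μb * A + At) + (Complex.I * μb * At + Att))
        + bC * ((Complex.I * μb) ^ 2 * (Complex.I * μb * A + At) * (1 / bC)
            + 2 * (Complex.I * μb) * (Complex.I * μb * SP + SPt)
            + (Complex.I * μb * SL + SLt))
        - cC ^ 2 * ((Complex.I * μb) ^ 2 * A * (1 / bC) + 2 * (Complex.I * μb) * SP + SL))
      = Complex.I ^ 2 * (-2 * At + 2 * bC * SP + (αC - cC ^ 2 / bC) * A)
        + μb⁻¹ * (Complex.I
            * (-3 * Att + 2 * αC * At + 2 * bC * SPt + bC * SL - 2 * cC ^ 2 * SP))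
        + (μb⁻¹) ^ 2 * (-Attt + αC * Att + bC * SLt - cC ^ 2 * SL) := by
  field_simp
  linear_combination (0 : ℂ) * Complex.I_sq

end MGTAux

/-- μ²-order limit of the conjugated backward MGT operator: with `ψ(x) = (1/√b)w·x` and
`γ = α − c²/b`,
`lim_{μ→∞} μ^{−2} e^{−iμ(ψ+t)} P*(e^{iμ(ψ+t)}a) = 2(∂_t a − √b w·∇a − (γ/2)a)`;
in particular the μ³-order coefficient vanishes and the leading transport equation for the
backward geometric optics amplitude is `∂_t a − √b w·∇a − (γ/2)a = 0`. -/
theorem backward_mgt_transport_limit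
    {n : ℕ} (hn : 1 ≤ n) (α c b : ℝ) (hb : 0 < b)
    (w : Fin n → ℝ) (hw : ∑ j, w j ^ 2 = 1)
    (a : ℝ → (Fin n → ℝ) → ℂ)
    (ha : ContDiff ℝ ∞ (fun p : ℝ × (Fin n → ℝ) => a p.1 p.2)) :
    ∀ (t : ℝ) (x : Fin n → ℝ),
      Tendsto
        (fun μ : ℝ =>
          ((μ : ℂ) ^ 2)⁻¹ * Complex.exp (-(Complex.I * (μ : ℂ) *
              ((planePhase b w x + t : ℝ) : ℂ))) *
            MGTBack α c b (GO μ (planePhase b w) a) t x)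
        atTop
        (nhds (2 * (dt a t x
          - (Real.sqrt b : ℂ) * ∑ j, ((w j : ℝ) : ℂ) * pd j a t x
          - (((α - c ^ 2 / b) / 2 : ℝ) : ℂ) * a t x))) := by
  intro t x
  have ha' : MGTAux.S a := ha
  have hSd : MGTAux.S (dt a) := MGTAux.S_dt ha'
  have hSdd : MGTAux.S (dt (dt a)) := MGTAux.S_dt hSd
  have hbne : (b : ℂ) ≠ 0 := by exact_mod_cast hb.ne'
  have hsbne : ((Real.sqrt b : ℝ) : ℂ) ≠ 0 := by
    exact_mod_cast (Real.sqrt_pos.mpr hb).ne'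
  have hss : ((Real.sqrt b : ℝ) : ℂ) * ((Real.sqrt b : ℝ) : ℂ) = (b : ℂ) := by
    rw [← Complex.ofReal_mul, Real.mul_self_sqrt hb.le]
  -- key pointwise identity for μ ≠ 0
  have key : ∀ μ : ℝ, μ ≠ 0 →
      ((μ : ℂ) ^ 2)⁻¹ * Complex.exp (-(Complex.I * (μ : ℂ) *
          ((planePhase b w x + t : ℝ) : ℂ))) *
        MGTBack α c b (GO μ (planePhase b w) a) t x
      = Complex.I ^ 2 * (-2 * dt a t x
            + 2 * (b : ℂ) * (∑ j, ((w j / Real.sqrt b : ℝ) : ℂ) * pd j a t x)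
            + ((α : ℂ) - (c : ℂ) ^ 2 / (b : ℂ)) * a t x)
        + ((μ : ℂ))⁻¹ * (Complex.I * (-3 * dt (dt a) t x + 2 * (α : ℂ) * dt a t x
            + 2 * (b : ℂ) * (∑ j, ((w j / Real.sqrt b : ℝ) : ℂ) * pd j (dt a) t x)
            + (b : ℂ) * (∑ j, pd j (pd j a) t x)
            - 2 * (c : ℂ) ^ 2 * (∑ j, ((w j / Real.sqrt b : ℝ) : ℂ) * pd j a t x)))
        + (((μ : ℂ))⁻¹) ^ 2 * (-(dt (dt (dt a)) t x) + (α : ℂ) * dt (dt a) t x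
            + (b : ℂ) * (∑ j, pd j (pd j (dt a)) t x)
            - (c : ℂ) ^ 2 * (∑ j, pd j (pd j a) t x)) := by
    intro μ hμ
    have hμc : (μ : ℂ) ≠ 0 := by exact_mod_cast hμ
    set F1 : ℝ → (Fin n → ℝ) → ℂ :=
      fun s y => Complex.I * (μ : ℂ) * a s y + dt a s y with hF1
    have hS1 : MGTAux.S F1 := by rw [hF1]; exact MGTAux.S_lin _ ha' hSd
    set F2 : ℝ → (Fin n → ℝ) → ℂ :=
      fun s y => Complex.I * (μ : ℂ) * F1 s y + dt F1 s y with hF2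
    have hS2 : MGTAux.S F2 := by rw [hF2]; exact MGTAux.S_lin _ hS1 (MGTAux.S_dt hS1)
    set F3 : ℝ → (Fin n → ℝ) → ℂ :=
      fun s y => Complex.I * (μ : ℂ) * F2 s y + dt F2 s y with hF3
    have e1 : dt (GO μ (planePhase b w) a) = GO μ (planePhase b w) F1 := by
      rw [hF1]; exact MGTAux.dt_GO μ _ ha'
    have e2 : dt (dt (GO μ (planePhase b w) a)) = GO μ (planePhase b w) F2 := by
      rw [e1, hF2]; exact MGTAux.dt_GO μ _ hS1
    have e3 : dt (dt (dt (GO μ (planePhase b w) a))) = GO μ (planePhase b w) F3 := by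
      rw [e2, hF3]; exact MGTAux.dt_GO μ _ hS2
    have hdtF1 : dt F1 = fun s y => Complex.I * (μ : ℂ) * dt a s y + dt (dt a) s y := by
      rw [hF1]; exact MGTAux.dt_lin _ ha' hSd
    have hdtdtF1 : dt (dt F1)
        = fun s y => Complex.I * (μ : ℂ) * dt (dt a) s y + dt (dt (dt a)) s y := by
      rw [hdtF1]; exact MGTAux.dt_lin _ hSd hSdd
    have hdtF2 : dt F2 = fun s y => Complex.I * (μ : ℂ) * dt F1 s y + dt (dt F1) s y := by
      rw [hF2]; exact MGTAux.dt_lin _ hS1 (MGTAux.S_dt hS1)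
    have hp1 : ∀ j : Fin n,
        pd j F1 = fun s y => Complex.I * (μ : ℂ) * pd j a s y + pd j (dt a) s y := by
      intro j; rw [hF1]; exact MGTAux.pd_lin _ j ha' hSd
    have hpp1 : ∀ j : Fin n,
        pd j (pd j F1)
          = fun s y => Complex.I * (μ : ℂ) * pd j (pd j a) s y + pd j (pd j (dt a)) s y := by
      intro j
      rw [hp1 j]
      exact MGTAux.pd_lin _ j (MGTAux.S_pd ha' j) (MGTAux.S_pd hSd j)
    have e4 : ∀ j : Fin n, pd j (pd j (GO μ (planePhase b w) F1)) t x
        = Complex.exp (Complex.I * (μ : ℂ) * ((planePhase b w x + t : ℝ) : ℂ)) *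
            (Complex.I * (μ : ℂ) * ((w j / Real.sqrt b : ℝ) : ℂ)
                * (Complex.I * (μ : ℂ) * ((w j / Real.sqrt b : ℝ) : ℂ) * F1 t x
                    + (Complex.I * (μ : ℂ) * pd j a t x + pd j (dt a) t x))
              + (Complex.I * (μ : ℂ) * ((w j / Real.sqrt b : ℝ) : ℂ)
                    * (Complex.I * (μ : ℂ) * pd j a t x + pd j (dt a) t x)
                  + (Complex.I * (μ : ℂ) * pd j (pd j a) t x
                      + pd j (pd j (dt a)) t x))) := by
      intro j
      rw [MGTAux.pdpd_GO μ b w j hS1]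
      simp only [GO]
      rw [congrFun (congrFun (hp1 j) t) x, congrFun (congrFun (hpp1 j) t) x]
    have e5 : ∀ j : Fin n, pd j (pd j (GO μ (planePhase b w) a)) t x
        = Complex.exp (Complex.I * (μ : ℂ) * ((planePhase b w x + t : ℝ) : ℂ)) *
            (Complex.I * (μ : ℂ) * ((w j / Real.sqrt b : ℝ) : ℂ)
                * (Complex.I * (μ : ℂ) * ((w j / Real.sqrt b : ℝ) : ℂ) * a t x + pd j a t x)
              + (Complex.I * (μ : ℂ) * ((w j / Real.sqrt b : ℝ) : ℂ) * pd j a t x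
                  + pd j (pd j a) t x)) := by
      intro j
      rw [MGTAux.pdpd_GO μ b w j ha']
      simp only [GO]
    have hMGT : MGTBack α c b (GO μ (planePhase b w) a) t x
        = Complex.exp (Complex.I * (μ : ℂ) * ((planePhase b w x + t : ℝ) : ℂ)) *
            (-(F3 t x) + (α : ℂ) * F2 t x
              + (b : ℂ) * (∑ j, (Complex.I * (μ : ℂ) * ((w j / Real.sqrt b : ℝ) : ℂ)
                    * (Complex.I * (μ : ℂ) * ((w j / Real.sqrt b : ℝ) : ℂ) * F1 t x
                        + (Complex.I * (μ : ℂ) * pd j a t x + pd j (dt a) t x))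
                  + (Complex.I * (μ : ℂ) * ((w j / Real.sqrt b : ℝ) : ℂ)
                        * (Complex.I * (μ : ℂ) * pd j a t x + pd j (dt a) t x)
                      + (Complex.I * (μ : ℂ) * pd j (pd j a) t x
                          + pd j (pd j (dt a)) t x))))
              - (c : ℂ) ^ 2 * (∑ j, (Complex.I * (μ : ℂ) * ((w j / Real.sqrt b : ℝ) : ℂ)
                    * (Complex.I * (μ : ℂ) * ((w j / Real.sqrt b : ℝ) : ℂ) * a t x
                        + pd j a t x)
                  + (Complex.I * (μ : ℂ) * ((w j / Real.sqrt b : ℝ) : ℂ) * pd j a t x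
                      + pd j (pd j a) t x)))) := by
      simp only [MGTBack, lap]
      rw [e3, e2, e1]
      rw [Finset.sum_congr rfl fun j _ => e4 j, Finset.sum_congr rfl fun j _ => e5 j,
        ← Finset.mul_sum, ← Finset.mul_sum]
      simp only [GO]
      ring
    rw [hMGT]
    have hEc : Complex.exp (-(Complex.I * (μ : ℂ) * ((planePhase b w x + t : ℝ) : ℂ)))
        * Complex.exp (Complex.I * (μ : ℂ) * ((planePhase b w x + t : ℝ) : ℂ)) = 1 := by
      rw [← Complex.exp_add]
      simp
    have hcancel : ∀ X : ℂ, ((μ : ℂ) ^ 2)⁻¹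
        * Complex.exp (-(Complex.I * (μ : ℂ) * ((planePhase b w x + t : ℝ) : ℂ)))
        * (Complex.exp (Complex.I * (μ : ℂ) * ((planePhase b w x + t : ℝ) : ℂ)) * X)
        = ((μ : ℂ) ^ 2)⁻¹ * X := by
      intro X
      calc ((μ : ℂ) ^ 2)⁻¹
          * Complex.exp (-(Complex.I * (μ : ℂ) * ((planePhase b w x + t : ℝ) : ℂ)))
          * (Complex.exp (Complex.I * (μ : ℂ) * ((planePhase b w x + t : ℝ) : ℂ)) * X)
          = ((μ : ℂ) ^ 2)⁻¹
            * ((Complex.exp (-(Complex.I * (μ : ℂ) * ((planePhase b w x + t : ℝ) : ℂ)))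
                * Complex.exp (Complex.I * (μ : ℂ) * ((planePhase b w x + t : ℝ) : ℂ))) * X) := by
            ring
        _ = ((μ : ℂ) ^ 2)⁻¹ * X := by rw [hEc]; ring
    rw [hcancel]
    -- convert the sums
    have hs1 : (∑ j, (Complex.I * (μ : ℂ) * ((w j / Real.sqrt b : ℝ) : ℂ)
          * (Complex.I * (μ : ℂ) * ((w j / Real.sqrt b : ℝ) : ℂ) * F1 t x
              + (Complex.I * (μ : ℂ) * pd j a t x + pd j (dt a) t x))
        + (Complex.I * (μ : ℂ) * ((w j / Real.sqrt b : ℝ) : ℂ)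
              * (Complex.I * (μ : ℂ) * pd j a t x + pd j (dt a) t x)
            + (Complex.I * (μ : ℂ) * pd j (pd j a) t x + pd j (pd j (dt a)) t x))))
        = (Complex.I * (μ : ℂ)) ^ 2 * F1 t x * (1 / (b : ℂ))
          + 2 * (Complex.I * (μ : ℂ))
            * (Complex.I * (μ : ℂ) * (∑ j, ((w j / Real.sqrt b : ℝ) : ℂ) * pd j a t x)
              + ∑ j, ((w j / Real.sqrt b : ℝ) : ℂ) * pd j (dt a) t x)
          + (Complex.I * (μ : ℂ) * (∑ j, pd j (pd j a) t x)
              + ∑ j, pd j (pd j (dt a)) t x) := by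
      rw [MGTAux.sum_helper b w hb hw (Complex.I * (μ : ℂ)) (F1 t x)
        (fun j => Complex.I * (μ : ℂ) * pd j a t x + pd j (dt a) t x)
        (fun j => Complex.I * (μ : ℂ) * pd j (pd j a) t x + pd j (pd j (dt a)) t x)]
      rw [MGTAux.sum_split1 (Complex.I * (μ : ℂ)) (fun j => ((w j / Real.sqrt b : ℝ) : ℂ))
        (fun j => pd j a t x) (fun j => pd j (dt a) t x)]
      rw [MGTAux.sum_split2 (Complex.I * (μ : ℂ)) (fun j => pd j (pd j a) t x)
        (fun j => pd j (pd j (dt a)) t x)]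
    have hs0 : (∑ j, (Complex.I * (μ : ℂ) * ((w j / Real.sqrt b : ℝ) : ℂ)
          * (Complex.I * (μ : ℂ) * ((w j / Real.sqrt b : ℝ) : ℂ) * a t x + pd j a t x)
        + (Complex.I * (μ : ℂ) * ((w j / Real.sqrt b : ℝ) : ℂ) * pd j a t x
            + pd j (pd j a) t x)))
        = (Complex.I * (μ : ℂ)) ^ 2 * a t x * (1 / (b : ℂ))
          + 2 * (Complex.I * (μ : ℂ)) * (∑ j, ((w j / Real.sqrt b : ℝ) : ℂ) * pd j a t x)
          + ∑ j, pd j (pd j a) t x := by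
      rw [MGTAux.sum_helper b w hb hw (Complex.I * (μ : ℂ)) (a t x)
        (fun j => pd j a t x) (fun j => pd j (pd j a) t x)]
    rw [hs1, hs0]
    have vF1 : F1 t x = Complex.I * (μ : ℂ) * a t x + dt a t x := by rw [hF1]
    have vdtF1 : dt F1 t x = Complex.I * (μ : ℂ) * dt a t x + dt (dt a) t x := by rw [hdtF1]
    have vddF1 : dt (dt F1) t x
        = Complex.I * (μ : ℂ) * dt (dt a) t x + dt (dt (dt a)) t x := by rw [hdtdtF1]
    have vF2 : F2 t x = Complex.I * (μ : ℂ) * F1 t x + dt F1 t x := by rw [hF2]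
    have vdtF2 : dt F2 t x = Complex.I * (μ : ℂ) * dt F1 t x + dt (dt F1) t x := by rw [hdtF2]
    have vF3 : F3 t x = Complex.I * (μ : ℂ) * F2 t x + dt F2 t x := by rw [hF3]
    rw [vF3, vF2, vdtF2, vdtF1, vddF1, vF1]
    exact MGTAux.key_algebra (μ : ℂ) (b : ℂ) (c : ℂ) (α : ℂ) hμc hbne
      (a t x) (dt a t x) (dt (dt a) t x) (dt (dt (dt a)) t x)
      (∑ j, ((w j / Real.sqrt b : ℝ) : ℂ) * pd j a t x)
      (∑ j, ((w j / Real.sqrt b : ℝ) : ℂ) * pd j (dt a) t x)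
      (∑ j, pd j (pd j a) t x)
      (∑ j, pd j (pd j (dt a)) t x)
  -- convert the limit value
  have hC : Complex.I ^ 2 * (-2 * dt a t x
        + 2 * (b : ℂ) * (∑ j, ((w j / Real.sqrt b : ℝ) : ℂ) * pd j a t x)
        + ((α : ℂ) - (c : ℂ) ^ 2 / (b : ℂ)) * a t x)
      = 2 * (dt a t x - (Real.sqrt b : ℂ) * ∑ j, ((w j : ℝ) : ℂ) * pd j a t x
          - (((α - c ^ 2 / b) / 2 : ℝ) : ℂ) * a t x) := by
    have hbSP : (b : ℂ) * (∑ j, ((w j / Real.sqrt b : ℝ) : ℂ) * pd j a t x)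
        = ((Real.sqrt b : ℝ) : ℂ) * ∑ j, ((w j : ℝ) : ℂ) * pd j a t x := by
      rw [Finset.mul_sum, Finset.mul_sum]
      refine Finset.sum_congr rfl fun j _ => ?_
      have hdiv : (b : ℂ) / ((Real.sqrt b : ℝ) : ℂ) = ((Real.sqrt b : ℝ) : ℂ) := by
        rw [← hss, mul_div_assoc, div_self hsbne, mul_one]
      push_cast
      calc (b : ℂ) * (((w j : ℝ) : ℂ) / ((Real.sqrt b : ℝ) : ℂ) * pd j a t x)
          = ((b : ℂ) / ((Real.sqrt b : ℝ) : ℂ)) * (((w j : ℝ) : ℂ) * pd j a t x) := by ring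
        _ = ((Real.sqrt b : ℝ) : ℂ) * (((w j : ℝ) : ℂ) * pd j a t x) := by rw [hdiv]
    have hcast : (((α - c ^ 2 / b) / 2 : ℝ) : ℂ) = ((α : ℂ) - (c : ℂ) ^ 2 / (b : ℂ)) / 2 := by
      push_cast
      ring
    rw [Complex.I_sq, hcast]
    linear_combination (-2 : ℂ) * hbSP
  -- the limit of the polynomial expression
  have hinv : Tendsto (fun μ : ℝ => ((μ : ℂ))⁻¹) atTop (nhds 0) := by
    have h1 : Tendsto (fun μ : ℝ => ((μ⁻¹ : ℝ) : ℂ)) atTop (nhds ((0 : ℝ) : ℂ)) :=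
      (Complex.continuous_ofReal.tendsto _).comp tendsto_inv_atTop_zero
    simpa [Complex.ofReal_inv] using h1
  have hT := (tendsto_const_nhds (x := Complex.I ^ 2 * (-2 * dt a t x
        + 2 * (b : ℂ) * (∑ j, ((w j / Real.sqrt b : ℝ) : ℂ) * pd j a t x)
        + ((α : ℂ) - (c : ℂ) ^ 2 / (b : ℂ)) * a t x)) (f := atTop)).add
      ((hinv.mul_const (Complex.I * (-3 * dt (dt a) t x + 2 * (α : ℂ) * dt a t x
          + 2 * (b : ℂ) * (∑ j, ((w j / Real.sqrt b : ℝ) : ℂ) * pd j (dt a) t x)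
          + (b : ℂ) * (∑ j, pd j (pd j a) t x)
          - 2 * (c : ℂ) ^ 2 * (∑ j, ((w j / Real.sqrt b : ℝ) : ℂ) * pd j a t x)))))
  have hT2 := hT.add ((hinv.pow 2).mul_const (-(dt (dt (dt a)) t x)
      + (α : ℂ) * dt (dt a) t x + (b : ℂ) * (∑ j, pd j (pd j (dt a)) t x)
      - (c : ℂ) ^ 2 * (∑ j, pd j (pd j a) t x)))
  have hT3 : Tendsto (fun μ : ℝ =>
      Complex.I ^ 2 * (-2 * dt a t x
          + 2 * (b : ℂ) * (∑ j, ((w j / Real.sqrt b : ℝ) : ℂ) * pd j a t x)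
          + ((α : ℂ) - (c : ℂ) ^ 2 / (b : ℂ)) * a t x)
        + ((μ : ℂ))⁻¹ * (Complex.I * (-3 * dt (dt a) t x + 2 * (α : ℂ) * dt a t x
            + 2 * (b : ℂ) * (∑ j, ((w j / Real.sqrt b : ℝ) : ℂ) * pd j (dt a) t x)
            + (b : ℂ) * (∑ j, pd j (pd j a) t x)
            - 2 * (c : ℂ) ^ 2 * (∑ j, ((w j / Real.sqrt b : ℝ) : ℂ) * pd j a t x)))
        + (((μ : ℂ))⁻¹) ^ 2 * (-(dt (dt (dt a)) t x) + (α : ℂ) * dt (dt a) t x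
            + (b : ℂ) * (∑ j, pd j (pd j (dt a)) t x)
            - (c : ℂ) ^ 2 * (∑ j, pd j (pd j a) t x)))
      atTop (nhds (2 * (dt a t x
          - (Real.sqrt b : ℂ) * ∑ j, ((w j : ℝ) : ℂ) * pd j a t x
          - (((α - c ^ 2 / b) / 2 : ℝ) : ℂ) * a t x))) := by
    rw [← hC]
    convert hT2 using 2
    ring
  refine Tendsto.congr' ?_ hT3
  filter_upwards [eventually_ne_atTop (0 : ℝ)] with μ hμ
  exact (key μ hμ).symm
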